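/- For any nonnegative integers a, b with a + b ≥ 1, the word 0^a 1^4 0^b is Ulam if and only if a + b ≡ 1 (mod 4). -/

import Mathlib

/-!
A word `w` of length at least two is Ulam iff it has exactly one Ulam split: a position `i` at
which `w.take i` and `w.drop i` are distinct Ulam words. Since `0^s` is Ulam only for `s = 1`,
a split of `0^a 1^(k+1) 0^b` inside the leading zeros works only at `i = 1`, one inside the
trailing zeros only just before the last letter, and any other split cuts the ones into
`0^a 1^j | 1^(k+1-j) 0^b`. Counting splits expresses Ulam-ness of `0^a 1^(k+1) 0^b` through
shorter words with at most as many ones. Together with invariance of Ulam words under reversal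
this shows in turn that `0^a 1` is always Ulam, that `0^a 1^2` is Ulam iff `a` is odd, that
`0^a 1^3` is Ulam iff `a ≡ 1, 2 (mod 4)`, and finally, by induction on `a + b`, the theorem;
each step is arithmetic modulo 4.
-/

/-- Ulam words with fuel bounding the recursion depth (fuel ≥ length suffices). -/
def UlamN : ℕ → List Bool → Prop
  | 0, _ => False
  | n + 1, w =>
    w = [false] ∨ w = [true] ∨
      ∃! p : List Bool × List Bool,
        p.1 ≠ [] ∧ p.2 ≠ [] ∧ UlamN n p.1 ∧ UlamN n p.2 ∧ p.1 ≠ p.2 ∧ p.1 ++ p.2 = w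

/-- A word over {0,1} (`false` = 0, `true` = 1) is Ulam. -/
def IsUlam (w : List Bool) : Prop := UlamN w.length w

/-- The integer whose binary representation (most significant digit first) is `w`. -/
def binVal (w : List Bool) : ℕ := w.foldl (fun acc b => 2 * acc + b.toNat) 0

theorem List.length_lt_of_append_eq {α : Type*} {u v w : List α} (hu : u ≠ []) (hv : v ≠ [])
    (h : u ++ v = w) : u.length < w.length ∧ v.length < w.length := by
  have := List.length_pos_iff.mpr hu
  have := List.length_pos_iff.mpr hv
  rw [← h, List.length_append]
  omega

theorem List.existsUnique_append_eq_iff {α : Type*} {w : List α}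
    {R : List α → List α → Prop} :
    (∃! p : List α × List α, p.1 ++ p.2 = w ∧ R p.1 p.2) ↔
      ∃! i, i ≤ w.length ∧ R (w.take i) (w.drop i) := by
  constructor
  · rintro ⟨⟨u, v⟩, ⟨rfl, hR⟩, huniq⟩
    refine ⟨u.length, ⟨by simp, by simpa using hR⟩, fun i ⟨hi, hRi⟩ => ?_⟩
    have := congrArg (List.length ∘ Prod.fst)
      (huniq (List.take i (u ++ v), List.drop i (u ++ v)) ⟨List.take_append_drop i _, hRi⟩)
    simp only [Function.comp_apply, List.length_take] at this hi
    omega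
  · rintro ⟨i, ⟨hi, hR⟩, huniq⟩
    refine ⟨(w.take i, w.drop i), ⟨List.take_append_drop i w, hR⟩, ?_⟩
    rintro ⟨u, v⟩ ⟨rfl, hRuv⟩
    obtain rfl : u.length = i := huniq _ ⟨by simp, by simpa using hRuv⟩
    simp

theorem not_ulamN_nil (n : ℕ) : ¬ UlamN n [] := by
  cases n with
  | zero => exact id
  | succ n =>
    simp only [UlamN, List.append_eq_nil_iff, reduceCtorEq, false_or]
    rintro ⟨p, ⟨hp, -, -, -, -, hp', -⟩, -⟩
    exact hp hp'

theorem ulamN_succ_iff {n : ℕ} {w : List Bool} (h : w.length ≤ n) :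
    UlamN (n + 1) w ↔ UlamN n w := by
  induction n generalizing w with
  | zero => simp [List.length_eq_zero_iff.mp (Nat.le_zero.mp h), not_ulamN_nil]
  | succ n ih =>
    rw [UlamN, UlamN]
    refine or_congr_right <| or_congr_right <| existsUnique_congr fun ⟨u, v⟩ => ?_
    by_cases hsplit : u ≠ [] ∧ v ≠ [] ∧ u ++ v = w
    · obtain ⟨hu, hv, huv⟩ := hsplit
      have := List.length_lt_of_append_eq hu hv huv
      rw [ih (by omega : u.length ≤ n), ih (by omega : v.length ≤ n)]
    · tauto

theorem ulamN_iff_isUlam {n : ℕ} {w : List Bool} (h : w.length ≤ n) :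
    UlamN n w ↔ IsUlam w := by
  induction n, h using Nat.le_induction with
  | base => rfl
  | succ n hn ih => exact (ulamN_succ_iff hn).trans ih

theorem not_isUlam_nil : ¬ IsUlam [] := not_ulamN_nil 0

theorem IsUlam.ne_nil {w : List Bool} (h : IsUlam w) : w ≠ [] := by
  rintro rfl
  exact not_isUlam_nil h

theorem isUlam_singleton (x : Bool) : IsUlam [x] := by
  cases x <;> simp [IsUlam, UlamN]

theorem ulamN_reverse (n : ℕ) (w : List Bool) : UlamN n w.reverse ↔ UlamN n w := by
  induction n generalizing w with
  | zero => rfl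
  | succ n ih =>
    rw [UlamN, UlamN, List.reverse_eq_cons_iff, List.reverse_eq_cons_iff]
    let swapReverse : List Bool × List Bool ≃ List Bool × List Bool :=
      ⟨fun p => (p.2.reverse, p.1.reverse), fun p => (p.2.reverse, p.1.reverse),
        fun p => by simp, fun p => by simp⟩
    refine or_congr Iff.rfl <| or_congr Iff.rfl <|
      swapReverse.existsUnique_congr fun ⟨u, v⟩ => ?_
    simp only [swapReverse, Equiv.coe_fn_mk, ne_eq, List.reverse_eq_nil_iff, ih,
      List.reverse_inj]
    rw [← List.reverse_append, List.reverse_eq_iff]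
    tauto

theorem isUlam_reverse (w : List Bool) : IsUlam w.reverse ↔ IsUlam w := by
  rw [IsUlam, List.length_reverse, ulamN_reverse, IsUlam]

def IsUlamSplit (w : List Bool) (i : ℕ) : Prop :=
  IsUlam (w.take i) ∧ IsUlam (w.drop i) ∧ w.take i ≠ w.drop i

theorem IsUlamSplit.lt_length {w : List Bool} {i : ℕ} (h : IsUlamSplit w i) :
    i < w.length := by
  by_contra hi
  exact h.2.1.ne_nil (List.drop_eq_nil_of_le (by omega))

theorem isUlam_iff_existsUnique_isUlamSplit {w : List Bool} (hw : 2 ≤ w.length) :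
    IsUlam w ↔ ∃! i, IsUlamSplit w i := by
  obtain ⟨n, hn⟩ : ∃ n, w.length = n + 1 := ⟨w.length - 1, by omega⟩
  have hsingle (x : Bool) : w ≠ [x] := fun h => by simp [h] at hw
  rw [IsUlam, hn, UlamN, or_iff_right (hsingle false), or_iff_right (hsingle true)]
  calc (∃! p : List Bool × List Bool, p.1 ≠ [] ∧ p.2 ≠ [] ∧ UlamN n p.1 ∧ UlamN n p.2 ∧
          p.1 ≠ p.2 ∧ p.1 ++ p.2 = w)
      ↔ ∃! p : List Bool × List Bool, p.1 ++ p.2 = w ∧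
          (IsUlam p.1 ∧ IsUlam p.2 ∧ p.1 ≠ p.2) := existsUnique_congr fun ⟨u, v⟩ => by
        by_cases hsplit : u ≠ [] ∧ v ≠ [] ∧ u ++ v = w
        · obtain ⟨hu, hv, huv⟩ := hsplit
          have := List.length_lt_of_append_eq hu hv huv
          rw [ulamN_iff_isUlam (by omega : u.length ≤ n),
            ulamN_iff_isUlam (by omega : v.length ≤ n)]
          tauto
        · have := @IsUlam.ne_nil u
          have := @IsUlam.ne_nil v
          tauto
    _ ↔ ∃! i, i ≤ w.length ∧ IsUlamSplit w i :=
        List.existsUnique_append_eq_iff (R := fun u v => IsUlam u ∧ IsUlam v ∧ u ≠ v)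
    _ ↔ ∃! i, IsUlamSplit w i :=
        existsUnique_congr fun i => and_iff_right_of_imp fun h => h.lt_length.le

open Classical in
noncomputable def ulamSplitCount (w : List Bool) : ℕ :=
  ∑ i ∈ Finset.range w.length, if IsUlamSplit w i then 1 else 0

theorem isUlam_iff_ulamSplitCount_eq_one {w : List Bool} (hw : 2 ≤ w.length) :
    IsUlam w ↔ ulamSplitCount w = 1 := by
  classical
  rw [isUlam_iff_existsUnique_isUlamSplit hw, ulamSplitCount, ← Finset.card_filter,
    Finset.card_eq_one_iff_existsUnique]
  refine existsUnique_congr fun i => ?_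
  simp only [Finset.mem_filter, Finset.mem_range]
  exact (and_iff_right_of_imp IsUlamSplit.lt_length).symm

theorem isUlam_replicate_iff (s : ℕ) (x : Bool) : IsUlam (List.replicate s x) ↔ s = 1 := by
  induction s using Nat.strong_induction_on with
  | _ s ih =>
    match s with
    | 0 => simpa using not_isUlam_nil
    | 1 => simpa using isUlam_singleton x
    | s + 2 =>
      refine iff_of_false ?_ (by omega)
      rw [isUlam_iff_existsUnique_isUlamSplit (by simp)]
      rintro ⟨i, ⟨hUt, hUd, hne⟩, -⟩
      rw [List.take_replicate] at hUt hne
      rw [List.drop_replicate] at hUd hne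
      have hi : i < s + 2 := by
        by_contra hi
        exact hUd.ne_nil (by simp; omega)
      rw [ih _ (by omega)] at hUt hUd
      exact hne (by rw [hUt, hUd])

def onesBlock (a k b : ℕ) : List Bool :=
  List.replicate a false ++ List.replicate k true ++ List.replicate b false

section onesBlock

variable {a k b : ℕ}

theorem length_onesBlock : (onesBlock a k b).length = a + k + b := by
  simp [onesBlock, Nat.add_assoc]

theorem count_true_onesBlock : (onesBlock a k b).count true = k := by
  simp [onesBlock, List.count_replicate]

theorem onesBlock_reverse : (onesBlock a k b).reverse = onesBlock b k a := by
  simp [onesBlock, List.append_assoc]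

theorem isUlam_onesBlock_comm : IsUlam (onesBlock a k b) ↔ IsUlam (onesBlock b k a) := by
  rw [← onesBlock_reverse, isUlam_reverse]

theorem onesBlock_inj {c l d : ℕ} (hk : 0 < k) (hl : 0 < l) :
    onesBlock a k b = onesBlock c l d ↔ a = c ∧ k = l ∧ b = d := by
  refine ⟨fun h => ?_, by rintro ⟨rfl, rfl, rfl⟩; rfl⟩
  have hkl : k = l := by simpa [count_true_onesBlock] using congrArg (List.count true) h
  have hac : a = c := by
    subst hkl
    obtain ⟨m, rfl⟩ : ∃ m, k = m + 1 := ⟨k - 1, by omega⟩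
    induction a generalizing c with
    | zero => cases c <;> simp_all [onesBlock, List.replicate_succ]
    | succ a ih => cases c <;> simp_all [onesBlock, List.replicate_succ]
  have hlen := congrArg List.length h
  simp only [length_onesBlock] at hlen
  omega

theorem take_onesBlock_of_le {s : ℕ} (h : s ≤ a) :
    (onesBlock a k b).take s = List.replicate s false := by
  simp [onesBlock, List.take_append, List.take_replicate, h]

theorem drop_onesBlock_of_le {s : ℕ} (h : s ≤ a) :
    (onesBlock a k b).drop s = onesBlock (a - s) k b := by
  simp [onesBlock, List.drop_append, List.drop_replicate, h]

theorem take_onesBlock_add {j : ℕ} (h : j ≤ k) :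
    (onesBlock a k b).take (a + j) = onesBlock a j 0 := by
  simp [onesBlock, List.take_append, List.take_replicate, h]

theorem drop_onesBlock_add {j : ℕ} (h : j ≤ k) :
    (onesBlock a k b).drop (a + j) = onesBlock 0 (k - j) b := by
  simp [onesBlock, List.drop_append, List.drop_replicate, h]

theorem take_onesBlock_add_add {j : ℕ} (h : j ≤ b) :
    (onesBlock a k b).take (a + k + j) = onesBlock a k j := by
  simp [onesBlock, List.take_append, List.take_replicate, Nat.add_assoc, h]

theorem drop_onesBlock_add_add (j : ℕ) :
    (onesBlock a k b).drop (a + k + j) = List.replicate (b - j) false := by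
  simp [onesBlock, List.drop_append, List.drop_replicate, Nat.add_assoc]

theorem isUlamSplit_onesBlock_of_le {s : ℕ} (hk : 0 < k) (hs : s ≤ a) :
    IsUlamSplit (onesBlock a k b) s ↔ s = 1 ∧ IsUlam (onesBlock (a - 1) k b) := by
  rw [IsUlamSplit, take_onesBlock_of_le hs, drop_onesBlock_of_le hs, isUlam_replicate_iff]
  refine ⟨fun ⟨hs1, hU, _⟩ => ⟨hs1, hs1 ▸ hU⟩, fun ⟨hs1, hU⟩ => ⟨hs1, hs1 ▸ hU, fun h => ?_⟩⟩
  simpa [count_true_onesBlock, List.count_replicate, hk.ne] using congrArg (List.count true) h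

theorem isUlamSplit_onesBlock_add {j : ℕ} (hj : 0 < j) (hjk : j < k) :
    IsUlamSplit (onesBlock a k b) (a + j) ↔
      IsUlam (onesBlock a j 0) ∧ IsUlam (onesBlock 0 (k - j) b) ∧
        ¬(a = 0 ∧ b = 0 ∧ j = k - j) := by
  rw [IsUlamSplit, take_onesBlock_add hjk.le, drop_onesBlock_add hjk.le,
    ne_eq, onesBlock_inj hj (by omega)]
  exact and_congr_right fun _ => and_congr_right fun _ => not_congr (by omega)

theorem isUlamSplit_onesBlock_add_add {j : ℕ} (hk : 0 < k) (hj : j < b) :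
    IsUlamSplit (onesBlock a k b) (a + k + j) ↔
      j = b - 1 ∧ IsUlam (onesBlock a k (b - 1)) := by
  rw [IsUlamSplit, take_onesBlock_add_add hj.le, drop_onesBlock_add_add, isUlam_replicate_iff]
  have hjb : b - j = 1 ↔ j = b - 1 := by omega
  refine ⟨fun ⟨hU, hb, _⟩ => ⟨hjb.mp hb, hjb.mp hb ▸ hU⟩,
    fun ⟨hjb', hU⟩ => ⟨hjb' ▸ hU, hjb.mpr hjb', fun h => ?_⟩⟩
  simpa [count_true_onesBlock, List.count_replicate, hk.ne'] using congrArg (List.count true) h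

open Classical in
theorem ulamSplitCount_onesBlock :
    ulamSplitCount (onesBlock a (k + 1) b) =
      (if 0 < a ∧ IsUlam (onesBlock (a - 1) (k + 1) b) then 1 else 0) +
      ∑ j ∈ Finset.range k,
        (if IsUlam (onesBlock a (j + 1) 0) ∧ IsUlam (onesBlock 0 (k - j) b) ∧
          ¬(a = 0 ∧ b = 0 ∧ j + 1 = k - j) then 1 else 0) +
      (if 0 < b ∧ IsUlam (onesBlock a (k + 1) (b - 1)) then 1 else 0) := by
  rw [ulamSplitCount, length_onesBlock, show a + (k + 1) + b = a + 1 + k + b by omega,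
    Finset.sum_range_add, Finset.sum_range_add]
  congr 2
  · rw [Finset.sum_congr rfl fun s hs => if_congr (isUlamSplit_onesBlock_of_le k.succ_pos
      (Nat.lt_succ_iff.mp (Finset.mem_range.mp hs))) rfl rfl]
    simp [ite_and]
  · refine Finset.sum_congr rfl fun j hj => if_congr ?_ rfl rfl
    rw [show a + 1 + j = a + (j + 1) by omega, isUlamSplit_onesBlock_add j.succ_pos
      (by simpa using hj), show k + 1 - (j + 1) = k - j by omega]
  · simp_rw [show ∀ j, a + 1 + k + j = a + (k + 1) + j from fun j => by omega]
    rw [Finset.sum_congr rfl fun j hj => if_congr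
      (isUlamSplit_onesBlock_add_add k.succ_pos (Finset.mem_range.mp hj)) rfl rfl]
    simp [ite_and]

open Classical in
theorem isUlam_onesBlock_iff (h : 2 ≤ a + (k + 1) + b) :
    IsUlam (onesBlock a (k + 1) b) ↔
      (if 0 < a ∧ IsUlam (onesBlock (a - 1) (k + 1) b) then 1 else 0) +
      ∑ j ∈ Finset.range k,
        (if IsUlam (onesBlock a (j + 1) 0) ∧ IsUlam (onesBlock 0 (k - j) b) ∧
          ¬(a = 0 ∧ b = 0 ∧ j + 1 = k - j) then 1 else 0) +
      (if 0 < b ∧ IsUlam (onesBlock a (k + 1) (b - 1)) then 1 else 0) = 1 := by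
  rw [isUlam_iff_ulamSplitCount_eq_one (length_onesBlock ▸ h), ulamSplitCount_onesBlock]

end onesBlock

theorem isUlam_onesBlock_one_zero (a : ℕ) : IsUlam (onesBlock a 1 0) := by
  induction a with
  | zero => exact isUlam_singleton true
  | succ a ih =>
    rw [isUlam_onesBlock_iff (k := 0) (by omega)]
    simp [ih]

theorem isUlam_onesBlock_two_zero (a : ℕ) : IsUlam (onesBlock a 2 0) ↔ a % 2 = 1 := by
  induction a using Nat.strong_induction_on with
  | _ a ih =>
    have hpre : 0 < a ∧ IsUlam (onesBlock (a - 1) 2 0) ↔ 0 < a ∧ (a - 1) % 2 = 1 :=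
      and_congr_right fun _ => ih _ (by omega)
    rw [isUlam_onesBlock_iff (k := 1) (by omega)]
    simp only [Finset.sum_range_succ, Finset.sum_range_zero]
    simp [hpre, isUlam_onesBlock_one_zero]
    split_ifs <;> omega

theorem isUlam_onesBlock_three_zero (a : ℕ) :
    IsUlam (onesBlock a 3 0) ↔ a % 4 = 1 ∨ a % 4 = 2 := by
  induction a using Nat.strong_induction_on with
  | _ a ih =>
    have hpre : 0 < a ∧ IsUlam (onesBlock (a - 1) 3 0) ↔
        0 < a ∧ ((a - 1) % 4 = 1 ∨ (a - 1) % 4 = 2) :=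
      and_congr_right fun _ => ih _ (by omega)
    rw [isUlam_onesBlock_iff (k := 2) (by omega)]
    simp only [Finset.sum_range_succ, Finset.sum_range_zero]
    simp [hpre, isUlam_onesBlock_one_zero, isUlam_onesBlock_two_zero]
    split_ifs <;> omega

theorem isUlam_onesBlock_four (a b : ℕ) : IsUlam (onesBlock a 4 b) ↔ (a + b) % 4 = 1 := by
  induction hn : a + b using Nat.strong_induction_on generalizing a b with
  | _ n ih =>
    have hpre : 0 < a ∧ IsUlam (onesBlock (a - 1) 4 b) ↔ 0 < a ∧ (a - 1 + b) % 4 = 1 :=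
      and_congr_right fun _ => ih _ (by omega) _ _ rfl
    have hsuf : 0 < b ∧ IsUlam (onesBlock a 4 (b - 1)) ↔ 0 < b ∧ (a + (b - 1)) % 4 = 1 :=
      and_congr_right fun _ => ih _ (by omega) _ _ rfl
    rw [isUlam_onesBlock_iff (k := 3) (by omega)]
    simp only [Finset.sum_range_succ, Finset.sum_range_zero]
    simp [hpre, hsuf, isUlam_onesBlock_one_zero, isUlam_onesBlock_two_zero,
      isUlam_onesBlock_three_zero, isUlam_onesBlock_comm (a := 0)]
    split_ifs <;> omega

theorem ulam_four_ones_general (a b : ℕ) :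
    IsUlam (List.replicate a false ++ List.replicate 4 true ++ List.replicate b false) ↔
      (a + b) % 4 = 1 :=
  isUlam_onesBlock_four a b

theorem ulam_four_ones (a b : ℕ) (hab : 1 ≤ a + b) :
    IsUlam (List.replicate a false ++ List.replicate 4 true ++ List.replicate b false) ↔
      (a + b) % 4 = 1 :=
  ulam_four_ones_general a b
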